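/- If a randomized mechanism M1 satisfies (α, ε1)-Rényi differential privacy and a randomized mechanism M2 (which may additionally depend on the output of M1) satisfies (α, ε2)-Rényi differential privacy, then their sequential (adaptive) composition M1 ∘ M2, which on a dataset D outputs the pair (M1(D), M2(D, M1(D))), satisfies (α, ε1 + ε2)-Rényi differential privacy. -/

import Mathlib

open scoped ENNReal

/-- Rényi divergence of order `α` between two discrete distributions:
`D_α(P‖Q) = (1/(α−1)) · log ∑_x P(x)^α Q(x)^{1−α}`. -/
noncomputable def renyiDiv {Ω : Type*} (α : ℝ) (P Q : PMF Ω) : ℝ :=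
  (α - 1)⁻¹ * Real.log (∑' x, (P x) ^ α * (Q x) ^ (1 - α)).toReal

/-- A randomized mechanism `M` satisfies `(α, ε)`-Rényi differential privacy with respect
to a neighboring relation on datasets. -/
def RDP {D Ω : Type*} (Neighbor : D → D → Prop) (M : D → PMF Ω) (α ε : ℝ) : Prop :=
  ∀ d d', Neighbor d d' → renyiDiv α (M d) (M d') ≤ ε

/-- The Rényi-sum of two PMFs is at least `1` (Hölder / Jensen). -/
lemma renyi_sum_one_le {Ω : Type*} {α : ℝ} (hα : 1 < α) (P Q : PMF Ω) :
    1 ≤ ∑' x, (P x) ^ α * (Q x) ^ (1 - α) := by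
  have hα0 : (0:ℝ) < α := lt_trans one_pos hα
  by_cases hz : ∃ x, Q x = 0 ∧ P x ≠ 0
  · obtain ⟨x, hQ, hP⟩ := hz
    have hterm : (P x) ^ α * (Q x) ^ (1 - α) = ⊤ := by
      rw [hQ, ENNReal.zero_rpow_of_neg (by linarith)]
      rw [ENNReal.mul_top]
      intro h
      exact hP ((ENNReal.rpow_eq_zero_iff.mp h).elim (fun h => h.1)
        (fun h => absurd h.2 (not_lt.mpr hα0.le)))
    calc (1:ℝ≥0∞) ≤ ⊤ := le_top
      _ = (P x) ^ α * (Q x) ^ (1 - α) := hterm.symm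
      _ ≤ ∑' x, (P x) ^ α * (Q x) ^ (1 - α) := ENNReal.le_tsum x
  · push_neg at hz
    letI : MeasurableSpace Ω := ⊤
    haveI : MeasurableSingletonClass Ω := ⟨fun _ => trivial⟩
    set f : Ω → ℝ≥0∞ := fun x => P x * Q x ^ ((1 - α) / α) with hf
    set g : Ω → ℝ≥0∞ := fun x => Q x ^ ((α - 1) / α) with hg
    have hpq : Real.HolderConjugate α (α / (α - 1)) := (Real.holderConjugate_iff_eq_conjExponent hα).mpr rfl
    have key := ENNReal.lintegral_mul_le_Lp_mul_Lq (μ := MeasureTheory.Measure.count)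
      hpq (measurable_from_top.aemeasurable) (measurable_from_top.aemeasurable)
      (f := f) (g := g)
    rw [MeasureTheory.lintegral_count, MeasureTheory.lintegral_count,
      MeasureTheory.lintegral_count] at key
    have hfg : ∀ x, (f * g) x = P x := by
      intro x
      by_cases hQx : Q x = 0
      · have hPx : P x = 0 := hz x hQx
        simp [hf, hg, hPx, hQx, ENNReal.zero_rpow_of_pos
          (div_pos (by linarith) hα0)]
      · simp only [Pi.mul_apply, hf, hg, mul_assoc]
        rw [← ENNReal.rpow_add _ _ hQx (Q.apply_ne_top x),
          show (1 - α) / α + (α - 1) / α = 0 by ring, ENNReal.rpow_zero, mul_one]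
    have hfp : ∀ x, f x ^ α = (P x) ^ α * (Q x) ^ (1 - α) := by
      intro x
      rw [hf, ENNReal.mul_rpow_of_nonneg _ _ hα0.le, ← ENNReal.rpow_mul]
      congr 1
      field_simp
    have hgq : ∀ x, g x ^ (α / (α - 1)) = Q x := by
      intro x
      rw [hg, ← ENNReal.rpow_mul]
      rw [show (α - 1) / α * (α / (α - 1)) = 1 by
        field_simp
        exact div_self (sub_ne_zero.mpr hα.ne')]
      exact ENNReal.rpow_one _
    simp only [hfg, hfp, hgq] at key
    rw [P.tsum_coe, Q.tsum_coe, ENNReal.one_rpow, mul_one] at key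
    calc (1:ℝ≥0∞) = 1 ^ α := (ENNReal.one_rpow α).symm
      _ ≤ ((∑' x, (P x) ^ α * (Q x) ^ (1 - α)) ^ (1 / α)) ^ α :=
        ENNReal.rpow_le_rpow key hα0.le
      _ = ∑' x, (P x) ^ α * (Q x) ^ (1 - α) := by
        rw [← ENNReal.rpow_mul, one_div_mul_cancel hα0.ne', ENNReal.rpow_one]

lemma renyiDiv_nonneg {Ω : Type*} {α : ℝ} (hα : 1 < α) (P Q : PMF Ω) :
    0 ≤ renyiDiv α P Q := by
  unfold renyiDiv
  apply mul_nonneg (inv_nonneg.mpr (by linarith))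
  by_cases hS : (∑' x, (P x) ^ α * (Q x) ^ (1 - α)) = ⊤
  · simp [hS]
  · apply Real.log_nonneg
    rw [← ENNReal.toReal_one]
    exact ENNReal.toReal_mono hS (renyi_sum_one_le hα P Q)

lemma renyi_sum_le_ofReal {Ω : Type*} {α ε : ℝ} (hα : 1 < α) (P Q : PMF Ω)
    (hS : (∑' x, (P x) ^ α * (Q x) ^ (1 - α)) ≠ ⊤)
    (h : renyiDiv α P Q ≤ ε) :
    (∑' x, (P x) ^ α * (Q x) ^ (1 - α)) ≤ ENNReal.ofReal (Real.exp ((α - 1) * ε)) := by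
  have h1 : (1:ℝ) ≤ (∑' x, (P x) ^ α * (Q x) ^ (1 - α)).toReal := by
    rw [← ENNReal.toReal_one]
    exact ENNReal.toReal_mono hS (renyi_sum_one_le hα P Q)
  have h2 : Real.log (∑' x, (P x) ^ α * (Q x) ^ (1 - α)).toReal ≤ (α - 1) * ε := by
    unfold renyiDiv at h
    exact (inv_mul_le_iff₀ (by linarith)).mp h
  rw [ENNReal.le_ofReal_iff_toReal_le hS (Real.exp_nonneg _)]
  exact (Real.log_le_iff_le_exp (by linarith)).mp h2

lemma comp_apply {Ω₁ Ω₂ : Type*} (P : PMF Ω₁) (Q : Ω₁ → PMF Ω₂) (a : Ω₁) (b : Ω₂) :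
    (P.bind fun ω => (Q ω).map (Prod.mk ω)) (a, b) = P a * Q a b := by
  rw [PMF.bind_apply]
  rw [tsum_eq_single a ?_]
  · congr 1
    rw [PMF.map_apply]
    rw [tsum_eq_single b ?_]
    · simp
    · intro b' hb'
      simp [Prod.ext_iff, Ne.symm hb']
  · intro ω hω
    rw [PMF.map_apply]
    simp [Prod.ext_iff, Ne.symm hω]

/-- RDP adaptive sequential composition: if `M₁` is `(α, ε₁)`-RDP and, for every possible
output `ω` of `M₁`, the mechanism `M₂ · ω` is `(α, ε₂)`-RDP, then the composed mechanism
`d ↦ (M₁(d), M₂(d, M₁(d)))` is `(α, ε₁ + ε₂)`-RDP. -/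
theorem rdp_composition {D Ω₁ Ω₂ : Type*} (Neighbor : D → D → Prop)
    (M₁ : D → PMF Ω₁) (M₂ : D → Ω₁ → PMF Ω₂) (α ε₁ ε₂ : ℝ) (hα : 1 < α)
    (h₁ : RDP Neighbor M₁ α ε₁)
    (h₂ : ∀ ω : Ω₁, RDP Neighbor (fun d => M₂ d ω) α ε₂) :
    RDP Neighbor (fun d => (M₁ d).bind fun ω => (M₂ d ω).map (Prod.mk ω)) α (ε₁ + ε₂) := by
  intro d d' hN
  have hα1 : (0:ℝ) < α - 1 := by linarith
  haveI hne : Nonempty Ω₁ := by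
    by_contra h
    haveI := not_nonempty_iff.mp h
    have := (M₁ d).tsum_coe
    simp [tsum_empty] at this
  have hε₁ : 0 ≤ ε₁ := le_trans (renyiDiv_nonneg hα (M₁ d) (M₁ d')) (h₁ d d' hN)
  have hε₂ : 0 ≤ ε₂ :=
    le_trans (renyiDiv_nonneg hα (M₂ d (Classical.arbitrary Ω₁)) (M₂ d' (Classical.arbitrary Ω₁)))
      (h₂ (Classical.arbitrary Ω₁) d d' hN)
  set A : Ω₁ → ℝ≥0∞ := fun a => (M₁ d a) ^ α * (M₁ d' a) ^ (1 - α) with hA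
  set S₂ : Ω₁ → ℝ≥0∞ := fun a => ∑' b, (M₂ d a b) ^ α * (M₂ d' a b) ^ (1 - α) with hS₂
  set T : ℝ≥0∞ := ∑' p : Ω₁ × Ω₂,
    (((M₁ d).bind fun ω => (M₂ d ω).map (Prod.mk ω)) p) ^ α *
      (((M₁ d').bind fun ω => (M₂ d' ω).map (Prod.mk ω)) p) ^ (1 - α) with hT
  have hTeq : T = ∑' a, A a * S₂ a := by
    rw [hT, ENNReal.tsum_prod']
    refine tsum_congr fun a => ?_
    rw [← ENNReal.tsum_mul_left]
    refine tsum_congr fun b => ?_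
    rw [comp_apply, comp_apply,
      ENNReal.mul_rpow_of_nonneg _ _ (by linarith : (0:ℝ) ≤ α),
      ENNReal.mul_rpow_of_ne_top ((M₁ d').apply_ne_top a) ((M₂ d' a).apply_ne_top b)]
    ring
  have hgoal : renyiDiv α ((M₁ d).bind fun ω => (M₂ d ω).map (Prod.mk ω))
      ((M₁ d').bind fun ω => (M₂ d' ω).map (Prod.mk ω)) = (α - 1)⁻¹ * Real.log T.toReal := rfl
  show renyiDiv α _ _ ≤ ε₁ + ε₂
  rw [hgoal]
  by_cases hfin : (∑' a, A a) ≠ ⊤ ∧ ∀ a, A a ≠ 0 → S₂ a ≠ ⊤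
  · obtain ⟨hAfin, hSfin⟩ := hfin
    have hbound : T ≤ ENNReal.ofReal (Real.exp ((α - 1) * (ε₁ + ε₂))) := by
      rw [hTeq]
      calc ∑' a, A a * S₂ a
          ≤ ∑' a, A a * ENNReal.ofReal (Real.exp ((α - 1) * ε₂)) := by
            refine ENNReal.tsum_le_tsum fun a => ?_
            by_cases h0 : A a = 0
            · simp [h0]
            · exact mul_le_mul_right (renyi_sum_le_ofReal hα (M₂ d a) (M₂ d' a)
                (hSfin a h0) (h₂ a d d' hN)) _
        _ = (∑' a, A a) * ENNReal.ofReal (Real.exp ((α - 1) * ε₂)) := ENNReal.tsum_mul_right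
        _ ≤ ENNReal.ofReal (Real.exp ((α - 1) * ε₁)) * ENNReal.ofReal (Real.exp ((α - 1) * ε₂)) :=
            mul_le_mul_left (renyi_sum_le_ofReal hα (M₁ d) (M₁ d') hAfin (h₁ d d' hN)) _
        _ = ENNReal.ofReal (Real.exp ((α - 1) * (ε₁ + ε₂))) := by
            rw [← ENNReal.ofReal_mul (Real.exp_nonneg _), ← Real.exp_add]
            ring_nf
    have hTfin : T ≠ ⊤ := ne_top_of_le_ne_top ENNReal.ofReal_ne_top hbound
    have hT1 : (1:ℝ) ≤ T.toReal := by
      rw [← ENNReal.toReal_one]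
      exact ENNReal.toReal_mono hTfin (renyi_sum_one_le hα _ _)
    have hTle : T.toReal ≤ Real.exp ((α - 1) * (ε₁ + ε₂)) :=
      ENNReal.toReal_le_of_le_ofReal (Real.exp_nonneg _) hbound
    rw [inv_mul_le_iff₀ hα1]
    exact (Real.log_le_iff_le_exp (by linarith)).mpr hTle
  · have hTtop : T = ⊤ := by
      rw [hTeq]
      rw [not_and_or] at hfin
      rcases hfin with hAtop | hStop
      · push_neg at hAtop
        refine top_le_iff.mp ?_
        calc (⊤:ℝ≥0∞) = ∑' a, A a := hAtop.symm
          _ ≤ ∑' a, A a * S₂ a := by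
              refine ENNReal.tsum_le_tsum fun a => ?_
              conv_lhs => rw [← mul_one (A a)]
              exact mul_le_mul_right (renyi_sum_one_le hα (M₂ d a) (M₂ d' a)) _
      · push_neg at hStop
        obtain ⟨a, hA0, hStop⟩ := hStop
        refine top_le_iff.mp ?_
        calc (⊤:ℝ≥0∞) = A a * S₂ a := by rw [hStop, ENNReal.mul_top hA0]
          _ ≤ ∑' a, A a * S₂ a := ENNReal.le_tsum a
    rw [hTtop]
    simp
    positivity
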